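/- arXiv:2501.07325 — 2 statements merged into one kernel-verified Lean document; each statement's English description precedes it below -/
import Mathlib

section
/- Let φ : (-∞,T] → ℝ^d be continuous, let −∞ < t₀ < t ≤ T, and suppose the segment φ_{t₀} ∈ C_r. Then for any 0 < λ ≤ 2r, ‖φ_t‖_r² ≤ e^{−2r(t−t₀)} ‖φ_{t₀}‖_r² + e^{−λt} · sup_{t₀ ≤ s ≤ t} e^{λs}|φ(s)|². -/
open Filter MeasureTheory Real

noncomputable def crNorm {d : ℕ} (r : ℝ) (f : ℝ → EuclideanSpace ℝ (Fin d)) : ℝ :=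
  ⨆ τ : Set.Iic (0 : ℝ), Real.exp (r * τ) * ‖f τ‖

def memCr {d : ℕ} (r : ℝ) (f : ℝ → EuclideanSpace ℝ (Fin d)) : Prop :=
  ContinuousOn f (Set.Iic 0) ∧
    ∃ L : EuclideanSpace ℝ (Fin d),
      Tendsto (fun τ : ℝ => Real.exp (r * τ) • f τ) atBot (nhds L)

/-
Split the past of `t` at `t₀`. For `τ ≤ t₀ - t`, the point `t + τ` lies in the past of `t₀`
and the weight `e^{rτ}` is `e^{-r(t-t₀)}` times the weight it carries in `φ_{t₀}`. For
`t₀ - t < τ ≤ 0`, the point `s = t + τ` lies in `[t₀, t]`, and `λ ≤ 2r` with `τ ≤ 0` gives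
`e^{2rτ} ≤ e^{λτ} = e^{-λt} e^{λs}`.
-/

open Set Topology

lemma bddAbove_image_Iic_of_tendsto_atBot {g : ℝ → ℝ} {a L : ℝ}
    (hg : ContinuousOn g (Iic a)) (hL : Tendsto g atBot (𝓝 L)) : BddAbove (g '' Iic a) := by
  obtain ⟨M, hM⟩ := eventually_atBot.mp (hL.eventually (eventually_le_nhds (lt_add_one L)))
  have hsplit : Iic a ⊆ Iic (min M a) ∪ Icc (min M a) a := by
    intro x hx
    rcases le_total x (min M a) with h | h
    exacts [Or.inl h, Or.inr ⟨h, hx⟩]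
  refine BddAbove.mono (image_mono hsplit) ?_
  rw [image_union]
  refine BddAbove.union ⟨L + 1, ?_⟩
    (isCompact_Icc.bddAbove_image (hg.mono fun x hx => hx.2))
  rintro _ ⟨x, hx, rfl⟩
  exact hM x (hx.trans (min_le_left M a))

section crNorm

variable {d : ℕ} {r : ℝ} {f : ℝ → EuclideanSpace ℝ (Fin d)}

lemma memCr.bddAbove_range (hf : memCr r f) :
    BddAbove (range fun τ : Iic (0 : ℝ) => exp (r * τ) * ‖f τ‖) := by
  obtain ⟨hcont, L, hL⟩ := hf
  have hlim : Tendsto (fun τ => exp (r * τ) * ‖f τ‖) atBot (𝓝 ‖L‖) := by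
    simpa [norm_smul, abs_of_pos (exp_pos _)] using hL.norm
  rw [← image_eq_range (fun τ => exp (r * τ) * ‖f τ‖)]
  exact bddAbove_image_Iic_of_tendsto_atBot (by fun_prop) hlim

lemma memCr.le_crNorm (hf : memCr r f) {τ : ℝ} (hτ : τ ≤ 0) :
    exp (r * τ) * ‖f τ‖ ≤ crNorm r f :=
  le_ciSup hf.bddAbove_range ⟨τ, hτ⟩

lemma crNorm_nonneg : 0 ≤ crNorm r f :=
  Real.iSup_nonneg fun _ => mul_nonneg (exp_pos _).le (norm_nonneg _)

lemma crNorm_sq_le {C : ℝ} (h : ∀ τ ≤ 0, (exp (r * τ) * ‖f τ‖) ^ 2 ≤ C) :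
    crNorm r f ^ 2 ≤ C := by
  have hC : 0 ≤ C := (sq_nonneg _).trans (h 0 le_rfl)
  refine (Real.le_sqrt crNorm_nonneg hC).1 (ciSup_le fun τ => ?_)
  exact (Real.le_sqrt (mul_nonneg (exp_pos _).le (norm_nonneg _)) hC).2 (h τ τ.2)

end crNorm

section segment

variable {d : ℕ} {r t₀ t τ : ℝ} {φ : ℝ → EuclideanSpace ℝ (Fin d)}

lemma sq_exp_mul_norm_le_of_le_sub (h0 : memCr r (fun τ => φ (t₀ + τ))) (hτ : τ ≤ t₀ - t) :
    (exp (r * τ) * ‖φ (t + τ)‖) ^ 2 ≤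
      exp (-(2 * r * (t - t₀))) * crNorm r (fun τ => φ (t₀ + τ)) ^ 2 := by
  have hshift : exp (r * τ) * ‖φ (t + τ)‖ =
      exp (-(r * (t - t₀))) * (exp (r * (τ + (t - t₀))) * ‖φ (t₀ + (τ + (t - t₀)))‖) := by
    rw [← mul_assoc, ← exp_add]
    ring_nf
  have hle : exp (r * τ) * ‖φ (t + τ)‖ ≤ exp (-(r * (t - t₀))) * crNorm r (fun τ => φ (t₀ + τ)) :=
    hshift ▸ mul_le_mul_of_nonneg_left (h0.le_crNorm (by linarith)) (exp_pos _).le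
  calc (exp (r * τ) * ‖φ (t + τ)‖) ^ 2
      ≤ (exp (-(r * (t - t₀))) * crNorm r (fun τ => φ (t₀ + τ))) ^ 2 :=
        pow_le_pow_left₀ (mul_nonneg (exp_pos _).le (norm_nonneg _)) hle 2
    _ = exp (-(2 * r * (t - t₀))) * crNorm r (fun τ => φ (t₀ + τ)) ^ 2 := by
        rw [mul_pow, ← exp_nat_mul]
        ring_nf

lemma sq_exp_mul_norm_le_of_sub_lt {lam : ℝ} (hlam : lam ≤ 2 * r)
    (hS : BddAbove (range fun s : Icc t₀ t => exp (lam * s) * ‖φ s‖ ^ 2))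
    (hτ : t₀ - t < τ) (hτ0 : τ ≤ 0) :
    (exp (r * τ) * ‖φ (t + τ)‖) ^ 2 ≤
      exp (-(lam * t)) * ⨆ s : Icc t₀ t, exp (lam * s) * ‖φ s‖ ^ 2 := by
  have hweight : exp (2 * (r * τ)) ≤ exp (lam * τ) := exp_le_exp.mpr (by nlinarith)
  calc (exp (r * τ) * ‖φ (t + τ)‖) ^ 2
      = exp (2 * (r * τ)) * ‖φ (t + τ)‖ ^ 2 := by
        rw [mul_pow, ← exp_nat_mul]
        norm_num
    _ ≤ exp (lam * τ) * ‖φ (t + τ)‖ ^ 2 := by gcongr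
    _ = exp (-(lam * t)) * (exp (lam * (t + τ)) * ‖φ (t + τ)‖ ^ 2) := by
        rw [← mul_assoc, ← exp_add]
        ring_nf
    _ ≤ exp (-(lam * t)) * ⨆ s : Icc t₀ t, exp (lam * s) * ‖φ s‖ ^ 2 :=
        mul_le_mul_of_nonneg_left
          (le_ciSup hS ⟨t + τ, by linarith, by linarith⟩) (exp_pos _).le

end segment

theorem stmt3_general (d : ℕ) (r : ℝ) (T t₀ t : ℝ)
    (φ : ℝ → EuclideanSpace ℝ (Fin d)) (hcont : ContinuousOn φ (Set.Iic T))
    (htT : t ≤ T)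
    (h0 : memCr r (fun τ => φ (t₀ + τ)))
    (lam : ℝ) (hlam : lam ≤ 2 * r) :
    (crNorm r (fun τ => φ (t + τ))) ^ 2 ≤
      Real.exp (-(2 * r * (t - t₀))) * (crNorm r (fun τ => φ (t₀ + τ))) ^ 2 +
        Real.exp (-(lam * t)) *
          ⨆ s : Set.Icc t₀ t, Real.exp (lam * s) * ‖φ s‖ ^ 2 := by
  have hS : BddAbove (range fun s : Icc t₀ t => exp (lam * s) * ‖φ s‖ ^ 2) := by
    rw [← image_eq_range (fun s => exp (lam * s) * ‖φ s‖ ^ 2)]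
    have hcontIcc : ContinuousOn φ (Icc t₀ t) := hcont.mono fun s hs => hs.2.trans htT
    exact isCompact_Icc.bddAbove_image (by fun_prop)
  have hSnn : 0 ≤ exp (-(lam * t)) * ⨆ s : Icc t₀ t, exp (lam * s) * ‖φ s‖ ^ 2 :=
    mul_nonneg (exp_pos _).le (Real.iSup_nonneg fun _ => by positivity)
  refine crNorm_sq_le fun τ hτ => ?_
  rcases le_or_gt τ (t₀ - t) with hpast | hrecent
  · exact (sq_exp_mul_norm_le_of_le_sub h0 hpast).trans (le_add_of_nonneg_right hSnn)
  · exact (sq_exp_mul_norm_le_of_sub_lt hlam hS hrecent hτ).trans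
      (le_add_of_nonneg_left (by positivity))

theorem stmt3 (d : ℕ) (r : ℝ) (hr : 0 < r) (T t₀ t : ℝ)
    (φ : ℝ → EuclideanSpace ℝ (Fin d)) (hcont : ContinuousOn φ (Set.Iic T))
    (ht₀ : t₀ < t) (htT : t ≤ T)
    (h0 : memCr r (fun τ => φ (t₀ + τ)))
    (lam : ℝ) (hlam0 : 0 < lam) (hlam : lam ≤ 2 * r) :
    (crNorm r (fun τ => φ (t + τ))) ^ 2 ≤
      Real.exp (-(2 * r * (t - t₀))) * (crNorm r (fun τ => φ (t₀ + τ))) ^ 2 +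
        Real.exp (-(lam * t)) *
          ⨆ s : Set.Icc t₀ t, Real.exp (lam * s) * ‖φ s‖ ^ 2 :=
  stmt3_general d r T t₀ t φ hcont htT h0 lam hlam
end

section
/- Let 0 < λ < 2r, let μ be a probability measure on (-∞,0] with μ^{(2r)} = ∫_{-∞}^0 e^{−2rτ}μ(dτ) < ∞, and let φ : (-∞,t] → ℝ^d (t ≥ 0) be continuous with segment φ_0 ∈ C_r. Then ∫_0^t ∫_{-∞}^0 e^{λs} |φ(s+τ)|² μ(dτ) ds ≤ (μ^{(2r)}/(2r−λ)) ‖φ_0‖_r² + μ^{(2r)} ∫_0^t e^{λs} |φ(s)|² ds. -/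
open Filter MeasureTheory Real

/-! Fix `τ ≤ 0` and `s ∈ [0, t]` and split on the sign of `s + τ`. If `s + τ ≤ 0`, the `C_r` bound
gives `e^{λs} |φ(s+τ)|² ≤ e^{-2rτ} e^{(λ-2r)s} ‖φ₀‖_r²`. If `0 < s + τ ≤ t`, then
`λs ≤ -2rτ + λ(s+τ)` since `λ ≤ 2r`, so `e^{λs} |φ(s+τ)|² ≤ e^{-2rτ} g(s+τ)`, where `g` is
`u ↦ e^{λu} |φ(u)|²` cut off to `[0, t]`. After integrating against `μ` and over `s ∈ [0, t]`,
the first term contributes at most `μ^{(2r)} ‖φ₀‖_r² / (2r - λ)`, and by Fubini and translation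
invariance of Lebesgue measure the second one at most `μ^{(2r)} ∫ g`. -/

open Set Bornology Topology

theorem isBounded_image_Iic_of_tendsto_atBot {α E : Type*} [LinearOrder α] [TopologicalSpace α]
    [CompactIccSpace α] [PseudoMetricSpace E] {g : α → E} {a : α} {L : E}
    (hg : ContinuousOn g (Iic a)) (hL : Tendsto g atBot (𝓝 L)) : IsBounded (g '' Iic a) := by
  have : Nonempty α := ⟨a⟩
  obtain ⟨s, hs, hbdd⟩ := Metric.exists_isBounded_image_of_tendsto hL
  obtain ⟨b, hb⟩ := mem_atBot_sets.1 hs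
  have hcpt : IsBounded (g '' Icc (min b a) a) :=
    (isCompact_Icc.image_of_continuousOn (hg.mono Icc_subset_Iic_self)).isBounded
  refine (hbdd.union hcpt).subset ?_
  rintro _ ⟨x, hx, rfl⟩
  rcases le_total x (min b a) with h | h
  · exact Or.inl ⟨x, hb x (h.trans (min_le_left _ _)), rfl⟩
  · exact Or.inr ⟨x, ⟨h, hx⟩, rfl⟩

section Translation

variable {G : Type*} [MeasurableSpace G] [AddGroup G] [MeasurableAdd₂ G] {ν μ : Measure G}
  [SFinite ν] [SFinite μ] [ν.IsAddRightInvariant] {w h : G → ℝ}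

theorem integrable_mul_comp_add_prod (hw : Integrable w μ) (hh : Integrable h ν)
    (hhm : StronglyMeasurable h) :
    Integrable (fun p : G × G => w p.2 * h (p.1 + p.2)) (ν.prod μ) := by
  have hmeas : AEStronglyMeasurable (fun p : G × G => w p.2 * h (p.1 + p.2)) (ν.prod μ) :=
    hw.aestronglyMeasurable.comp_snd.mul (hhm.comp_measurable measurable_add).aestronglyMeasurable
  refine (integrable_prod_iff' hmeas).2
    ⟨ae_of_all _ fun τ => (hh.comp_add_right τ).const_mul (w τ), ?_⟩
  simp only [norm_mul, integral_const_mul, integral_add_right_eq_self fun s => ‖h s‖]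
  exact hw.norm.mul_const _

theorem integral_integral_mul_comp_add (hw : Integrable w μ) (hh : Integrable h ν)
    (hhm : StronglyMeasurable h) :
    ∫ s, ∫ τ, w τ * h (s + τ) ∂μ ∂ν = (∫ τ, w τ ∂μ) * ∫ u, h u ∂ν := by
  rw [integral_integral_swap (integrable_mul_comp_add_prod hw hh hhm)]
  simp only [integral_const_mul, integral_add_right_eq_self h, integral_mul_const]

theorem setIntegral_integral_mul_comp_add_le (hw : Integrable w μ) (hh : Integrable h ν)
    (hhm : StronglyMeasurable h) (hw0 : 0 ≤ w) (hh0 : 0 ≤ h) (S : Set G) :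
    ∫ s in S, ∫ τ, w τ * h (s + τ) ∂μ ∂ν ≤ (∫ τ, w τ ∂μ) * ∫ u, h u ∂ν :=
  (setIntegral_le_integral (integrable_mul_comp_add_prod hw hh hhm).integral_prod_left
    (ae_of_all _ fun _ => integral_nonneg fun τ => mul_nonneg (hw0 τ) (hh0 _))).trans_eq
    (integral_integral_mul_comp_add hw hh hhm)

end Translation

theorem setIntegral_Ioc_exp_mul_le {a : ℝ} (ha : a < 0) (t : ℝ) :
    ∫ s in Ioc 0 t, exp (a * s) ≤ (-a)⁻¹ := calc
  ∫ s in Ioc 0 t, exp (a * s) ≤ ∫ s in Ioi 0, exp (a * s) :=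
    setIntegral_mono_set (integrableOn_exp_mul_Ioi ha 0) (ae_of_all _ fun _ => (exp_pos _).le)
      (ae_of_all _ Ioc_subset_Ioi_self)
  _ = (-a)⁻¹ := by rw [integral_exp_mul_Ioi ha]; simp [neg_div]

noncomputable def weightedSqIndicator {d : ℕ} (lam t : ℝ) (φ : ℝ → EuclideanSpace ℝ (Fin d)) :
    ℝ → ℝ :=
  (Icc 0 t).indicator fun u => exp (lam * u) * ‖φ u‖ ^ 2

section WeightedSq

variable {d : ℕ} {lam t : ℝ} {φ : ℝ → EuclideanSpace ℝ (Fin d)}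

theorem weightedSqIndicator_nonneg (u : ℝ) : 0 ≤ weightedSqIndicator lam t φ u :=
  indicator_nonneg (fun _ _ => by positivity) u

theorem ContinuousOn.stronglyMeasurable_weightedSqIndicator (hφ : ContinuousOn φ (Icc 0 t)) :
    StronglyMeasurable (weightedSqIndicator lam t φ) := by
  rw [weightedSqIndicator, ← piecewise_eq_indicator]
  exact (ContinuousOn.measurable_piecewise (by fun_prop) continuousOn_const
    measurableSet_Icc).stronglyMeasurable

theorem ContinuousOn.integrable_weightedSqIndicator (hφ : ContinuousOn φ (Icc 0 t)) :
    Integrable (weightedSqIndicator lam t φ) :=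
  (integrable_indicator_iff measurableSet_Icc).2 (ContinuousOn.integrableOn_Icc (by fun_prop))

theorem integral_weightedSqIndicator (ht : 0 ≤ t) :
    ∫ u, weightedSqIndicator lam t φ u = ∫ s in (0 : ℝ)..t, exp (lam * s) * ‖φ s‖ ^ 2 := by
  rw [weightedSqIndicator, integral_indicator measurableSet_Icc, integral_Icc_eq_integral_Ioc,
    intervalIntegral.integral_of_le ht]

end WeightedSq

section Cr

variable {d : ℕ} {r lam s t τ : ℝ} {φ : ℝ → EuclideanSpace ℝ (Fin d)}

theorem memCr.bddAbove (h : memCr r φ) :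
    BddAbove (range fun τ : Iic (0 : ℝ) => exp (r * τ) * ‖φ τ‖) := by
  obtain ⟨hcont, L, hL⟩ := h
  have hg : ContinuousOn (fun τ : ℝ => exp (r * τ) • φ τ) (Iic 0) := by fun_prop
  obtain ⟨C, hC⟩ := isBounded_iff_forall_norm_le.1 (isBounded_image_Iic_of_tendsto_atBot hg hL)
  refine ⟨C, ?_⟩
  rintro _ ⟨⟨τ, hτ⟩, rfl⟩
  simpa [norm_smul, abs_of_pos (exp_pos _)] using hC _ ⟨τ, hτ, rfl⟩

theorem memCr.exp_mul_norm_le_crNorm (h : memCr r φ) (hτ : τ ≤ 0) :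
    exp (r * τ) * ‖φ τ‖ ≤ crNorm r φ :=
  le_ciSup h.bddAbove (⟨τ, hτ⟩ : Iic (0 : ℝ))

theorem memCr.norm_sq_le (h : memCr r φ) (hτ : τ ≤ 0) :
    ‖φ τ‖ ^ 2 ≤ exp (-(2 * r * τ)) * crNorm r φ ^ 2 := by
  have hnorm : ‖φ τ‖ ≤ exp (-(r * τ)) * crNorm r φ := calc
    ‖φ τ‖ = exp (-(r * τ)) * (exp (r * τ) * ‖φ τ‖) := by rw [← mul_assoc, ← exp_add]; simp
    _ ≤ exp (-(r * τ)) * crNorm r φ := by gcongr; exact h.exp_mul_norm_le_crNorm hτ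
  calc ‖φ τ‖ ^ 2 ≤ (exp (-(r * τ)) * crNorm r φ) ^ 2 := by gcongr
    _ = exp (-(2 * r * τ)) * crNorm r φ ^ 2 := by
      rw [mul_pow, ← exp_nat_mul]; ring_nf

theorem memCr.exp_mul_norm_sq_comp_add_le (h : memCr r φ) (hlam : lam ≤ 2 * r) (hs : s ≤ t)
    (hτ : τ ≤ 0) :
    exp (lam * s) * ‖φ (s + τ)‖ ^ 2 ≤
      exp ((lam - 2 * r) * s) * (crNorm r φ ^ 2 * exp (-(2 * r * τ))) +
        exp (-(2 * r * τ)) * weightedSqIndicator lam t φ (s + τ) := by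
  have hw : 0 ≤ exp (-(2 * r * τ)) * weightedSqIndicator lam t φ (s + τ) :=
    mul_nonneg (exp_pos _).le (weightedSqIndicator_nonneg _)
  rcases le_or_gt (s + τ) 0 with hpast | hpresent
  · have hbound : exp (lam * s) * ‖φ (s + τ)‖ ^ 2 ≤
        exp ((lam - 2 * r) * s) * (crNorm r φ ^ 2 * exp (-(2 * r * τ))) := calc
      _ ≤ exp (lam * s) * (exp (-(2 * r * (s + τ))) * crNorm r φ ^ 2) := by
        gcongr; exact h.norm_sq_le hpast
      _ = _ := by rw [← mul_assoc, ← exp_add, mul_left_comm, ← exp_add]; ring_nf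
    linarith
  · have hmem : s + τ ∈ Icc 0 t := ⟨hpresent.le, by linarith⟩
    have hexp : exp (lam * s) ≤ exp (-(2 * r * τ)) * exp (lam * (s + τ)) := by
      rw [← exp_add]; exact exp_le_exp.2 (by nlinarith)
    calc exp (lam * s) * ‖φ (s + τ)‖ ^ 2
        ≤ exp (-(2 * r * τ)) * exp (lam * (s + τ)) * ‖φ (s + τ)‖ ^ 2 := by gcongr
      _ = exp (-(2 * r * τ)) * weightedSqIndicator lam t φ (s + τ) := by
        rw [weightedSqIndicator, indicator_of_mem hmem, mul_assoc]
      _ ≤ _ := le_add_of_nonneg_left (by positivity)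

theorem memCr.integral_exp_mul_norm_sq_comp_add_le (h : memCr r φ) {μ : Measure ℝ}
    (hsupp : μ (Ioi 0) = 0) (hμ : Integrable (fun τ => exp (-(2 * r * τ))) μ)
    (hlam : lam ≤ 2 * r) (hs : s ≤ t)
    (hint : Integrable (fun τ => exp (-(2 * r * τ)) * weightedSqIndicator lam t φ (s + τ)) μ) :
    ∫ τ, exp (lam * s) * ‖φ (s + τ)‖ ^ 2 ∂μ ≤
      exp ((lam - 2 * r) * s) * (crNorm r φ ^ 2 * ∫ τ, exp (-(2 * r * τ)) ∂μ) +
        ∫ τ, exp (-(2 * r * τ)) * weightedSqIndicator lam t φ (s + τ) ∂μ := by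
  have hfirst := (hμ.const_mul (crNorm r φ ^ 2)).const_mul (exp ((lam - 2 * r) * s))
  rw [← integral_const_mul, ← integral_const_mul, ← integral_add hfirst hint]
  refine integral_mono_of_nonneg (ae_of_all _ fun τ => by positivity) (hfirst.add hint) ?_
  filter_upwards [measure_eq_zero_iff_ae_notMem.1 hsupp] with τ hτ
  exact h.exp_mul_norm_sq_comp_add_le hlam hs (not_lt.1 hτ)

end Cr

theorem stmt6_general (d : ℕ) (r lam : ℝ) (hlam : lam < 2 * r)
    (μ : Measure ℝ) [IsProbabilityMeasure μ]
    (hsupp : μ (Set.Ioi 0) = 0)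
    (hμ2r : Integrable (fun τ : ℝ => Real.exp (-(2 * r * τ))) μ)
    (t : ℝ) (ht : 0 ≤ t)
    (φ : ℝ → EuclideanSpace ℝ (Fin d)) (hcont : ContinuousOn φ (Set.Iic t))
    (h0 : memCr r φ) :
    ∫ s in (0 : ℝ)..t, ∫ τ, Real.exp (lam * s) * ‖φ (s + τ)‖ ^ 2 ∂μ ≤
      ((∫ τ, Real.exp (-(2 * r * τ)) ∂μ) / (2 * r - lam)) * (crNorm r φ) ^ 2 +
        (∫ τ, Real.exp (-(2 * r * τ)) ∂μ) *
          ∫ s in (0 : ℝ)..t, Real.exp (lam * s) * ‖φ s‖ ^ 2 := by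
  set M := ∫ τ, exp (-(2 * r * τ)) ∂μ
  set K := crNorm r φ
  have hM : 0 ≤ M := integral_nonneg fun τ => (exp_pos _).le
  have hφ : ContinuousOn φ (Icc 0 t) := hcont.mono Icc_subset_Iic_self
  have hg := hφ.integrable_weightedSqIndicator (lam := lam)
  have hgm := hφ.stronglyMeasurable_weightedSqIndicator (lam := lam)
  have hF := integrable_mul_comp_add_prod (ν := volume) hμ2r hg hgm
  set G := fun s => ∫ τ, exp (-(2 * r * τ)) * weightedSqIndicator lam t φ (s + τ) ∂μ
  have hG : IntegrableOn G (Ioc 0 t) := hF.integral_prod_left.integrableOn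
  have hexp : IntegrableOn (fun s => exp ((lam - 2 * r) * s) * (K ^ 2 * M)) (Ioc 0 t) :=
    Continuous.integrableOn_Ioc (by fun_prop)
  have hinner : ∀ᵐ s ∂volume.restrict (Ioc 0 t),
      ∫ τ, exp (lam * s) * ‖φ (s + τ)‖ ^ 2 ∂μ ≤ exp ((lam - 2 * r) * s) * (K ^ 2 * M) + G s := by
    filter_upwards [ae_restrict_of_ae hF.prod_right_ae, ae_restrict_mem measurableSet_Ioc]
      with s hs hst
    exact h0.integral_exp_mul_norm_sq_comp_add_le hsupp hμ2r hlam.le hst.2 hs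
  rw [intervalIntegral.integral_of_le ht, ← integral_weightedSqIndicator ht]
  calc _ ≤ ∫ s in Ioc 0 t, (exp ((lam - 2 * r) * s) * (K ^ 2 * M) + G s) :=
        integral_mono_of_nonneg (ae_of_all _ fun s => integral_nonneg fun τ => by positivity)
          (Integrable.add hexp hG) hinner
    _ = (∫ s in Ioc 0 t, exp ((lam - 2 * r) * s)) * (K ^ 2 * M) + ∫ s in Ioc 0 t, G s := by
        rw [integral_add hexp hG, integral_mul_const]
    _ ≤ (2 * r - lam)⁻¹ * (K ^ 2 * M) + M * ∫ u, weightedSqIndicator lam t φ u := by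
        refine add_le_add (mul_le_mul_of_nonneg_right ?_ (by positivity)) ?_
        · simpa only [neg_sub] using setIntegral_Ioc_exp_mul_le (a := lam - 2 * r) (by linarith) t
        · exact setIntegral_integral_mul_comp_add_le hμ2r hg hgm (fun τ => (exp_pos _).le)
            weightedSqIndicator_nonneg _
    _ = _ := by ring

theorem stmt6 (d : ℕ) (r lam : ℝ) (hr : 0 < r) (hlam0 : 0 < lam) (hlam : lam < 2 * r)
    (μ : Measure ℝ) [IsProbabilityMeasure μ]
    (hsupp : μ (Set.Ioi 0) = 0)
    (hμ2r : Integrable (fun τ : ℝ => Real.exp (-(2 * r * τ))) μ)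
    (t : ℝ) (ht : 0 ≤ t)
    (φ : ℝ → EuclideanSpace ℝ (Fin d)) (hcont : ContinuousOn φ (Set.Iic t))
    (h0 : memCr r φ) :
    ∫ s in (0 : ℝ)..t, ∫ τ, Real.exp (lam * s) * ‖φ (s + τ)‖ ^ 2 ∂μ ≤
      ((∫ τ, Real.exp (-(2 * r * τ)) ∂μ) / (2 * r - lam)) * (crNorm r φ) ^ 2 +
        (∫ τ, Real.exp (-(2 * r * τ)) ∂μ) *
          ∫ s in (0 : ℝ)..t, Real.exp (lam * s) * ‖φ s‖ ^ 2 :=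
  stmt6_general d r lam hlam μ hsupp hμ2r t ht φ hcont h0
end
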